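/- arXiv:1610.07563 — 4 statements merged into one kernel-verified Lean document; each statement's English description precedes it below -/
import Mathlib

section
/- Let L : (Fin d → ℝ) → ℝ be any function, λ = 2√(μ₁μ₂) with μ₁, μ₂ > 0, and for each α define a_j(α) ≥ 0. Then α̂ minimizes G(α) = L(α) + λ ∑_j √(a_j(α)) if and only if (α̂, σ̂) minimizes H(α,σ) = L(α) + μ₁ ∑_j σ_j⁻¹ a_j(α) + μ₂ ∑_j σ_j over α and σ > 0, where σ̂_j = √(μ₁/μ₂) √(a_j(α̂)) (assuming a_j(α̂) > 0 for all j). -/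
/-!
For `x ≥ 0` and `s > 0`, AM-GM gives `μ₁ x / s + μ₂ s ≥ 2 √(μ₁ μ₂) √x`, with equality at
`s = √(μ₁/μ₂) √x`. Summing over the coordinates, minimizing `H(α, ·)` over `σ > 0` yields exactly
`G(α)`, and the minimum is attained at `σ̂(α)`; so `α̂` minimizes `G` iff `(α̂, σ̂(α̂))` minimizes `H`.
-/

open Finset Real

lemma two_mul_sqrt_mul_le_add {u v : ℝ} (hu : 0 ≤ u) (hv : 0 ≤ v) : 2 * √(u * v) ≤ u + v := by
  rw [sqrt_mul hu]
  nlinarith [sq_nonneg (√u - √v), sq_sqrt hu, sq_sqrt hv]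

section Variational

variable {μ₁ μ₂ : ℝ}

lemma two_mul_sqrt_mul_sqrt_le {x s : ℝ} (hμ₁ : 0 ≤ μ₁) (hμ₂ : 0 ≤ μ₂) (hx : 0 ≤ x) (hs : 0 < s) :
    2 * √(μ₁ * μ₂) * √x ≤ μ₁ * (s⁻¹ * x) + μ₂ * s := by
  have hprod : μ₁ * (s⁻¹ * x) * (μ₂ * s) = μ₁ * μ₂ * x := by field_simp
  calc 2 * √(μ₁ * μ₂) * √x = 2 * √(μ₁ * (s⁻¹ * x) * (μ₂ * s)) := by
        rw [hprod, sqrt_mul (mul_nonneg hμ₁ hμ₂) x, mul_assoc]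
    _ ≤ μ₁ * (s⁻¹ * x) + μ₂ * s := two_mul_sqrt_mul_le_add (by positivity) (by positivity)

lemma add_eq_two_mul_sqrt_mul_sqrt {x : ℝ} (hμ₁ : 0 < μ₁) (hμ₂ : 0 < μ₂) (hx : 0 < x) :
    μ₁ * ((√(μ₁ / μ₂) * √x)⁻¹ * x) + μ₂ * (√(μ₁ / μ₂) * √x) = 2 * √(μ₁ * μ₂) * √x := by
  rw [sqrt_div hμ₁.le, sqrt_mul hμ₁.le]
  have h₁ : 0 < √μ₁ := sqrt_pos.2 hμ₁
  have h₂ : 0 < √μ₂ := sqrt_pos.2 hμ₂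
  have hx' : 0 < √x := sqrt_pos.2 hx
  field_simp
  rw [sq_sqrt hμ₁.le, sq_sqrt hμ₂.le, sq_sqrt hx.le]
  ring

variable {ι : Type*} [Fintype ι] {x : ι → ℝ}

lemma two_mul_sqrt_mul_sum_sqrt_le (hμ₁ : 0 ≤ μ₁) (hμ₂ : 0 ≤ μ₂) (hx : ∀ j, 0 ≤ x j)
    {σ : ι → ℝ} (hσ : ∀ j, 0 < σ j) :
    2 * √(μ₁ * μ₂) * ∑ j, √(x j) ≤ μ₁ * ∑ j, (σ j)⁻¹ * x j + μ₂ * ∑ j, σ j := by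
  simp only [mul_sum, ← sum_add_distrib]
  exact sum_le_sum fun j _ => two_mul_sqrt_mul_sqrt_le hμ₁ hμ₂ (hx j) (hσ j)

lemma add_sum_eq_two_mul_sqrt_mul_sum_sqrt (hμ₁ : 0 < μ₁) (hμ₂ : 0 < μ₂) (hx : ∀ j, 0 < x j) :
    μ₁ * ∑ j, (√(μ₁ / μ₂) * √(x j))⁻¹ * x j + μ₂ * ∑ j, √(μ₁ / μ₂) * √(x j)
      = 2 * √(μ₁ * μ₂) * ∑ j, √(x j) := by
  simp only [mul_sum, ← sum_add_distrib]
  exact sum_congr rfl fun j _ => add_eq_two_mul_sqrt_mul_sqrt hμ₁ hμ₂ (hx j)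

end Variational

theorem stmt2_general (d : ℕ) (L : (Fin d → ℝ) → ℝ)
    (a : (Fin d → ℝ) → Fin d → ℝ) (ha : ∀ α j, 0 < a α j)
    (μ₁ μ₂ : ℝ) (hμ₁ : 0 < μ₁) (hμ₂ : 0 < μ₂) (lam : ℝ)
    (hlam : lam = 2 * Real.sqrt (μ₁ * μ₂)) (αhat : Fin d → ℝ) :
    (∀ α : Fin d → ℝ,
        L αhat + lam * ∑ j, Real.sqrt (a αhat j)
          ≤ L α + lam * ∑ j, Real.sqrt (a α j))
    ↔ (∀ (α : Fin d → ℝ) (σ : Fin d → ℝ), (∀ j, 0 < σ j) →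
        L αhat + μ₁ * ∑ j, (Real.sqrt (μ₁ / μ₂) * Real.sqrt (a αhat j))⁻¹ * a αhat j
            + μ₂ * ∑ j, Real.sqrt (μ₁ / μ₂) * Real.sqrt (a αhat j)
          ≤ L α + μ₁ * ∑ j, (σ j)⁻¹ * a α j + μ₂ * ∑ j, σ j) := by
  subst hlam
  have hσhat : ∀ β, μ₁ * ∑ j, (√(μ₁ / μ₂) * √(a β j))⁻¹ * a β j
      + μ₂ * ∑ j, √(μ₁ / μ₂) * √(a β j) = 2 * √(μ₁ * μ₂) * ∑ j, √(a β j) :=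
    fun β => add_sum_eq_two_mul_sqrt_mul_sum_sqrt hμ₁ hμ₂ (ha β)
  constructor
  · intro hG α σ hσ
    have hH := two_mul_sqrt_mul_sum_sqrt_le hμ₁.le hμ₂.le (fun j => (ha α j).le) hσ
    linarith [hG α, hσhat αhat]
  · intro hH α
    have hσpos : ∀ j, 0 < √(μ₁ / μ₂) * √(a α j) := fun j =>
      mul_pos (sqrt_pos.2 (div_pos hμ₁ hμ₂)) (sqrt_pos.2 (ha α j))
    linarith [hH α _ hσpos, hσhat αhat, hσhat α]

theorem stmt2 (d : ℕ) (hd : 0 < d) (L : (Fin d → ℝ) → ℝ)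
    (a : (Fin d → ℝ) → Fin d → ℝ) (ha : ∀ α j, 0 < a α j)
    (μ₁ μ₂ : ℝ) (hμ₁ : 0 < μ₁) (hμ₂ : 0 < μ₂) (lam : ℝ)
    (hlam : lam = 2 * Real.sqrt (μ₁ * μ₂)) (αhat : Fin d → ℝ) :
    (∀ α : Fin d → ℝ,
        L αhat + lam * ∑ j, Real.sqrt (a αhat j)
          ≤ L α + lam * ∑ j, Real.sqrt (a α j))
    ↔ (∀ (α : Fin d → ℝ) (σ : Fin d → ℝ), (∀ j, 0 < σ j) →
        L αhat + μ₁ * ∑ j, (Real.sqrt (μ₁ / μ₂) * Real.sqrt (a αhat j))⁻¹ * a αhat j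
            + μ₂ * ∑ j, Real.sqrt (μ₁ / μ₂) * Real.sqrt (a αhat j)
          ≤ L α + μ₁ * ∑ j, (σ j)⁻¹ * a α j + μ₂ * ∑ j, σ j) :=
  stmt2_general d L a ha μ₁ μ₂ hμ₁ hμ₂ lam hlam αhat
end

section
/- Let L : ℝ^{d×T} → ℝ be arbitrary and p, k > 0. Define F(β, c) = L((c_j β_j^t)_{j,t}) + γ₁ ∑_{t,j} |β_j^t|^p + γ₂ ∑_j c_j^k over β ∈ ℝ^{d×T} and c ∈ ℝ^d with c_j ≥ 0, and define G(α) = L(α) + λ ∑_{j=1}^d (∑_{t=1}^T |α_j^t|^p)^{k/(p+k)} with λ = γ₁^{k/(p+k)} γ₂^{p/(p+k)} ((p/k)^{k/(p+k)} + (k/p)^{p/(p+k)}). Then inf over (β, c) of F equals inf over α of G. -/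
/-!
Write `θ = k / (p + k)`, so that `1 - θ = p / (p + k)`. In row `j`, `α_j = c_j β_j` gives
`∑_t |α_j^t|^p = c_j^p s_j` with `s_j = ∑_t |β_j^t|^p`, and `(c_j^p s_j)^θ = s_j^θ (c_j^k)^(1-θ)`.
Weighted AM-GM therefore gives `λ (c_j^p s_j)^θ ≤ γ₁ s_j + γ₂ c_j^k`, because
`λ = (γ₁/θ)^θ (γ₂/(1-θ))^(1-θ)`, and equality holds once `c_j` is rescaled so that
`γ₁ s_j / θ = γ₂ c_j^k / (1-θ)`. So every value of `F` dominates the value of `G` at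
`α = (c_j β_j^t)`, and every value of `G` is a value of `F`; the two infima agree, also when both
sets are unbounded below and `sInf` is `0` on both sides.
-/

open Real

section WeightedAMGM

variable {θ τ A B x y : ℝ}

lemma scaled_geom_mean_eq (hθ : 0 < θ) (hτ : 0 < τ)
    (hA : 0 ≤ A) (hB : 0 ≤ B) (hx : 0 ≤ x) (hy : 0 ≤ y) :
    (A / θ) ^ θ * (B / τ) ^ τ * (x ^ θ * y ^ τ) = (A * x / θ) ^ θ * (B * y / τ) ^ τ := by
  rw [mul_div_right_comm A, mul_div_right_comm B,
    mul_rpow (by positivity) hx, mul_rpow (by positivity) hy]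
  ring

lemma scaled_geom_mean_le_add (hθ : 0 < θ) (hτ : 0 < τ) (hθτ : θ + τ = 1)
    (hA : 0 ≤ A) (hB : 0 ≤ B) (hx : 0 ≤ x) (hy : 0 ≤ y) :
    (A / θ) ^ θ * (B / τ) ^ τ * (x ^ θ * y ^ τ) ≤ A * x + B * y := by
  rw [scaled_geom_mean_eq hθ hτ hA hB hx hy]
  calc (A * x / θ) ^ θ * (B * y / τ) ^ τ ≤ θ * (A * x / θ) + τ * (B * y / τ) :=
        geom_mean_le_arith_mean2_weighted hθ.le hτ.le (by positivity) (by positivity) hθτ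
    _ = A * x + B * y := by field_simp

lemma scaled_geom_mean_eq_add_of_div_eq (hθ : 0 < θ) (hτ : 0 < τ) (hθτ : θ + τ = 1)
    (hA : 0 ≤ A) (hB : 0 ≤ B) (hx : 0 ≤ x) (hy : 0 ≤ y) (hxy : A * x / θ = B * y / τ) :
    (A / θ) ^ θ * (B / τ) ^ τ * (x ^ θ * y ^ τ) = A * x + B * y := by
  have hz : 0 ≤ A * x / θ := by positivity
  rw [scaled_geom_mean_eq hθ hτ hA hB hx hy, ← hxy,
    ← rpow_add' hz (by rw [hθτ]; exact one_ne_zero), hθτ, rpow_one]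
  calc A * x / θ = θ * (A * x / θ) + τ * (B * y / τ) := by rw [← hxy, ← add_mul, hθτ, one_mul]
    _ = A * x + B * y := by field_simp

end WeightedAMGM

noncomputable def jointPenaltyConst (p k γ₁ γ₂ : ℝ) : ℝ :=
  γ₁ ^ (k / (p + k)) * γ₂ ^ (p / (p + k)) * ((p / k) ^ (k / (p + k)) + (k / p) ^ (p / (p + k)))

section RowPenalty

variable {p k γ₁ γ₂ : ℝ}

lemma div_add_div_self_eq_one (hp : 0 < p) (hk : 0 < k) : k / (p + k) + p / (p + k) = 1 := by
  field_simp; ring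

lemma jointPenaltyConst_eq (hp : 0 < p) (hk : 0 < k) (hγ₁ : 0 ≤ γ₁) (hγ₂ : 0 ≤ γ₂) :
    jointPenaltyConst p k γ₁ γ₂
      = (γ₁ / (k / (p + k))) ^ (k / (p + k)) * (γ₂ / (p / (p + k))) ^ (p / (p + k)) := by
  have hpk : 0 < p + k := by positivity
  rw [jointPenaltyConst]
  set θ := k / (p + k)
  set τ := p / (p + k)
  have hθτ : θ + τ = 1 := div_add_div_self_eq_one hp hk
  have hsplit : ∀ {a : ℝ}, 0 < a → a = a ^ θ * a ^ τ := fun ha => by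
    rw [← rpow_add ha, hθτ, rpow_one]
  rw [div_rpow hγ₁ (by positivity), div_rpow hγ₂ (by positivity),
    div_rpow hk.le hpk.le, div_rpow hp.le hpk.le, div_rpow hp.le hk.le, div_rpow hk.le hp.le]
  field_simp
  linear_combination γ₁ ^ θ * γ₂ ^ τ * ((hsplit hp).symm + (hsplit hk).symm - (hsplit hpk).symm)

lemma mul_rpow_div_eq {r c s : ℝ} (hc : 0 ≤ c) (hs : 0 ≤ s) :
    (c ^ p * s) ^ (k / r) = s ^ (k / r) * (c ^ k) ^ (p / r) := by
  rw [mul_rpow (rpow_nonneg hc p) hs, ← rpow_mul hc, ← rpow_mul hc, mul_comm, mul_div_assoc',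
    mul_div_assoc', mul_comm p k]

lemma jointPenaltyConst_mul_rpow_le (hp : 0 < p) (hk : 0 < k) (hγ₁ : 0 ≤ γ₁) (hγ₂ : 0 ≤ γ₂)
    {c s : ℝ} (hc : 0 ≤ c) (hs : 0 ≤ s) :
    jointPenaltyConst p k γ₁ γ₂ * (c ^ p * s) ^ (k / (p + k)) ≤ γ₁ * s + γ₂ * c ^ k := by
  rw [jointPenaltyConst_eq hp hk hγ₁ hγ₂, mul_rpow_div_eq hc hs]
  exact scaled_geom_mean_le_add (by positivity) (by positivity)
    (div_add_div_self_eq_one hp hk) hγ₁ hγ₂ hs (rpow_nonneg hc k)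

lemma exists_add_eq_jointPenaltyConst_mul_rpow (hp : 0 < p) (hk : 0 < k) (hγ₁ : 0 < γ₁)
    (hγ₂ : 0 < γ₂) {a : ℝ} (ha : 0 < a) :
    ∃ c, 0 < c ∧
      γ₁ * (a / c ^ p) + γ₂ * c ^ k = jointPenaltyConst p k γ₁ γ₂ * a ^ (k / (p + k)) := by
  have hpk : 0 < p + k := by positivity
  -- the equality case of weighted AM-GM: `γ₁ (a / c^p) / θ = γ₂ c^k / (1 - θ)`
  set c := (γ₁ * p * a / (γ₂ * k)) ^ (1 / (p + k))
  have hc : 0 < c := by positivity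
  have hcpk : γ₂ * k * (c ^ p * c ^ k) = γ₁ * p * a := by
    rw [← rpow_add hc, ← rpow_mul (by positivity), one_div_mul_cancel hpk.ne', rpow_one]
    field_simp
  have hcp := rpow_pos_of_pos hc p
  have hcp_mul : c ^ p * (a / c ^ p) = a := mul_div_cancel₀ a hcp.ne'
  refine ⟨c, hc, ?_⟩
  rw [← hcp_mul, jointPenaltyConst_eq hp hk hγ₁.le hγ₂.le, mul_rpow_div_eq hc.le (by positivity),
    scaled_geom_mean_eq_add_of_div_eq (by positivity) (by positivity)
      (div_add_div_self_eq_one hp hk) hγ₁.le hγ₂.le (by positivity) (rpow_nonneg hc.le k), hcp_mul]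
  field_simp
  linear_combination -hcpk

end RowPenalty

lemma sum_abs_mul_rpow {κ : Type*} {p : ℝ} {s : Finset κ} {c : ℝ} (hc : 0 ≤ c) (b : κ → ℝ) :
    ∑ t ∈ s, |c * b t| ^ p = c ^ p * ∑ t ∈ s, |b t| ^ p := by
  rw [Finset.mul_sum]
  refine Finset.sum_congr rfl fun t _ => ?_
  rw [abs_mul, abs_of_nonneg hc, mul_rpow hc (abs_nonneg _)]

section MatrixPenalty

variable {ι κ : Type*} [Fintype ι] [Fintype κ] {p k γ₁ γ₂ : ℝ}

lemma exists_smul_eq_and_add_eq (hp : 0 < p) (hk : 0 < k) (hγ₁ : 0 < γ₁) (hγ₂ : 0 < γ₂)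
    (a : κ → ℝ) :
    ∃ c, 0 ≤ c ∧ ∃ b : κ → ℝ, c • b = a ∧
      γ₁ * ∑ t, |b t| ^ p + γ₂ * c ^ k
        = jointPenaltyConst p k γ₁ γ₂ * (∑ t, |a t| ^ p) ^ (k / (p + k)) := by
  have hs : 0 ≤ ∑ t, |a t| ^ p := by positivity
  rcases hs.eq_or_lt with hs | hs
  · have ha : a = 0 := by
      funext t
      have := (Finset.sum_eq_zero_iff_of_nonneg (fun t _ => by positivity)).1 hs.symm t
        (Finset.mem_univ t)
      simpa [rpow_eq_zero (abs_nonneg _) hp.ne'] using this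
    refine ⟨0, le_rfl, 0, by rw [ha, smul_zero], ?_⟩
    simp [← hs, zero_rpow hp.ne', zero_rpow hk.ne', zero_rpow (by positivity : k / (p + k) ≠ 0)]
  · obtain ⟨c, hc, hceq⟩ := exists_add_eq_jointPenaltyConst_mul_rpow hp hk hγ₁ hγ₂ hs
    refine ⟨c, hc.le, c⁻¹ • a, smul_inv_smul₀ hc.ne' a, ?_⟩
    have hb : ∑ t, |(c⁻¹ • a) t| ^ p = (∑ t, |a t| ^ p) / c ^ p := by
      rw [div_eq_inv_mul, ← inv_rpow hc.le, ← sum_abs_mul_rpow (inv_nonneg.2 hc.le)]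
      rfl
    rw [hb, hceq]

lemma exists_factorization (hp : 0 < p) (hk : 0 < k) (hγ₁ : 0 < γ₁) (hγ₂ : 0 < γ₂)
    (α : ι → κ → ℝ) :
    ∃ (β : ι → κ → ℝ) (c : ι → ℝ), (∀ j, 0 ≤ c j) ∧ (fun j t => c j * β j t) = α ∧
      γ₁ * ∑ t, ∑ j, |β j t| ^ p + γ₂ * ∑ j, c j ^ k
        = jointPenaltyConst p k γ₁ γ₂ * ∑ j, (∑ t, |α j t| ^ p) ^ (k / (p + k)) := by
  choose c hc β hβ hrow using fun j => exists_smul_eq_and_add_eq hp hk hγ₁ hγ₂ (α j)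
  refine ⟨β, c, hc, funext hβ, ?_⟩
  simp only [Finset.mul_sum, ← hrow, Finset.sum_add_distrib]
  rw [Finset.sum_comm]

lemma jointPenalty_le (hp : 0 < p) (hk : 0 < k) (hγ₁ : 0 ≤ γ₁) (hγ₂ : 0 ≤ γ₂)
    (β : ι → κ → ℝ) {c : ι → ℝ} (hc : ∀ j, 0 ≤ c j) :
    jointPenaltyConst p k γ₁ γ₂ * ∑ j, (∑ t, |c j * β j t| ^ p) ^ (k / (p + k))
      ≤ γ₁ * ∑ t, ∑ j, |β j t| ^ p + γ₂ * ∑ j, c j ^ k := by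
  calc jointPenaltyConst p k γ₁ γ₂ * ∑ j, (∑ t, |c j * β j t| ^ p) ^ (k / (p + k))
      = ∑ j, jointPenaltyConst p k γ₁ γ₂ * (c j ^ p * ∑ t, |β j t| ^ p) ^ (k / (p + k)) := by
        simp only [Finset.mul_sum (a := jointPenaltyConst p k γ₁ γ₂), sum_abs_mul_rpow (hc _)]
    _ ≤ ∑ j, (γ₁ * ∑ t, |β j t| ^ p + γ₂ * c j ^ k) := Finset.sum_le_sum fun j _ =>
        jointPenaltyConst_mul_rpow_le hp hk hγ₁ hγ₂ (hc j) (by positivity)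
    _ = γ₁ * ∑ t, ∑ j, |β j t| ^ p + γ₂ * ∑ j, c j ^ k := by
        rw [Finset.sum_add_distrib, ← Finset.mul_sum, ← Finset.mul_sum, Finset.sum_comm]

end MatrixPenalty

theorem stmt11_general (d T : ℕ)
    (L : (Fin d → Fin T → ℝ) → ℝ) (p k : ℝ) (hp : 0 < p) (hk : 0 < k)
    (γ₁ γ₂ : ℝ) (hγ₁ : 0 < γ₁) (hγ₂ : 0 < γ₂) (lam : ℝ)
    (hlam : lam = γ₁ ^ (k / (p + k)) * γ₂ ^ (p / (p + k))
        * ((p / k) ^ (k / (p + k)) + (k / p) ^ (p / (p + k)))) :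
    sInf {v : ℝ | ∃ (β : Fin d → Fin T → ℝ) (c : Fin d → ℝ), (∀ j, 0 ≤ c j) ∧
        v = L (fun j t => c j * β j t) + γ₁ * ∑ t, ∑ j, |β j t| ^ p
            + γ₂ * ∑ j, c j ^ k}
      = sInf {v : ℝ | ∃ α : Fin d → Fin T → ℝ,
        v = L α + lam * ∑ j, (∑ t, |α j t| ^ p) ^ (k / (p + k))} := by
  change lam = jointPenaltyConst p k γ₁ γ₂ at hlam
  subst hlam
  apply csInf_eq_csInf_of_forall_exists_le
  · rintro _ ⟨β, c, hc, rfl⟩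
    refine ⟨_, ⟨fun j t => c j * β j t, rfl⟩, ?_⟩
    rw [add_assoc]
    exact add_le_add le_rfl (jointPenalty_le hp hk hγ₁.le hγ₂.le β hc)
  · rintro _ ⟨α, rfl⟩
    obtain ⟨β, c, hc, rfl, hpen⟩ := exists_factorization hp hk hγ₁ hγ₂ α
    exact ⟨_, ⟨β, c, hc, rfl⟩, by rw [add_assoc, hpen]⟩

theorem stmt11 (d T : ℕ) (hd : 0 < d) (hT : 0 < T)
    (L : (Fin d → Fin T → ℝ) → ℝ) (p k : ℝ) (hp : 0 < p) (hk : 0 < k)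
    (γ₁ γ₂ : ℝ) (hγ₁ : 0 < γ₁) (hγ₂ : 0 < γ₂) (lam : ℝ)
    (hlam : lam = γ₁ ^ (k / (p + k)) * γ₂ ^ (p / (p + k))
        * ((p / k) ^ (k / (p + k)) + (k / p) ^ (p / (p + k)))) :
    sInf {v : ℝ | ∃ (β : Fin d → Fin T → ℝ) (c : Fin d → ℝ), (∀ j, 0 ≤ c j) ∧
        v = L (fun j t => c j * β j t) + γ₁ * ∑ t, ∑ j, |β j t| ^ p
            + γ₂ * ∑ j, c j ^ k}
      = sInf {v : ℝ | ∃ α : Fin d → Fin T → ℝ,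
        v = L α + lam * ∑ j, (∑ t, |α j t| ^ p) ^ (k / (p + k))} :=
  stmt11_general d T L p k hp hk γ₁ γ₂ hγ₁ hγ₂ lam hlam
end

section
/- With p = k = 1, for any matrix α ∈ ℝ^{d×T}, the infimum over c_j > 0 of γ₁ ∑_{j,t} |α_j^t|/c_j + γ₂ ∑_j c_j equals 2√(γ₁γ₂) ∑_{j=1}^d √(∑_{t=1}^T |α_j^t|). -/
/-!
The objective splits over features as `∑ⱼ (bⱼ / cⱼ + γ₂ cⱼ)` with `bⱼ = γ₁ ∑ₜ |αⱼᵗ|`, and the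
`cⱼ` vary independently, so its infimum is the sum of the one-dimensional infima. By AM-GM,
`b / c + γ c ≥ 2 √(b γ)`, with equality at `c = √(b / γ)` when `b > 0`; when `b = 0` the value
`2 √(b γ) = 0` is only approached as `c → 0`, which is why the statement is about an infimum.
-/

open Set
open scoped Pointwise

theorem isGLB_finsetSum {ι G : Type*} [AddCommGroup G] [PartialOrder G] [IsOrderedAddMonoid G]
    {S : ι → Set G} {m : ι → G} (s : Finset ι) (h : ∀ i ∈ s, IsGLB (S i) (m i)) :
    IsGLB (∑ i ∈ s, S i) (∑ i ∈ s, m i) := by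
  classical
  induction s using Finset.induction_on with
  | empty => exact isGLB_singleton (a := (0 : G))
  | insert i s hi ih =>
    rw [Finset.sum_insert hi, Finset.sum_insert hi]
    exact (h i (Finset.mem_insert_self i s)).add
      (ih fun j hj => h j (Finset.mem_insert_of_mem hj))

theorem isGLB_sum_apply_of_isGLB_image {ι β G : Type*} [Fintype ι] [AddCommGroup G]
    [PartialOrder G] [IsOrderedAddMonoid G] {S : Set β} {f : ι → β → G} {m : ι → G}
    (h : ∀ i, IsGLB (f i '' S) (m i)) :
    IsGLB {v | ∃ c : ι → β, (∀ i, c i ∈ S) ∧ v = ∑ i, f i (c i)} (∑ i, m i) := by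
  convert isGLB_finsetSum Finset.univ fun i _ => h i using 1
  ext v
  simp only [mem_ofPred_eq, mem_fintype_sum, mem_image]
  constructor
  · rintro ⟨c, hc, rfl⟩
    exact ⟨fun i => f i (c i), fun i => ⟨c i, hc i, rfl⟩, rfl⟩
  · rintro ⟨g, hg, rfl⟩
    choose c hc hfc using hg
    exact ⟨c, hc, by simp only [hfc]⟩

theorem two_sqrt_mul_le_div_add_mul {b γ c : ℝ} (hb : 0 ≤ b) (hγ : 0 ≤ γ) (hc : 0 < c) :
    2 * √(b * γ) ≤ b / c + γ * c := by
  have hprod : √(b / c) * √(γ * c) = √(b * γ) := by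
    rw [← Real.sqrt_mul (by positivity)]
    congr 1
    field_simp
  calc 2 * √(b * γ) = 2 * √(b / c) * √(γ * c) := by rw [mul_assoc, hprod]
    _ ≤ √(b / c) ^ 2 + √(γ * c) ^ 2 := two_mul_le_add_sq _ _
    _ = b / c + γ * c := by rw [Real.sq_sqrt (by positivity), Real.sq_sqrt (by positivity)]

theorem isGLB_div_add_mul_image_Ioi {b γ : ℝ} (hb : 0 ≤ b) (hγ : 0 < γ) :
    IsGLB ((fun c => b / c + γ * c) '' Ioi 0) (2 * √(b * γ)) := by
  rcases hb.eq_or_lt with rfl | hb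
  · simpa [image_const_mul_Ioi_zero hγ] using isGLB_Ioi (a := (0 : ℝ))
  · set s := √(b / γ)
    have hs : 0 < s := Real.sqrt_pos.2 (by positivity)
    have hbs : b = γ * s ^ 2 := by
      rw [Real.sq_sqrt (by positivity)]
      field_simp
    refine IsLeast.isGLB ⟨⟨s, hs, ?_⟩, ?_⟩
    · rw [hbs, show γ * s ^ 2 * γ = (γ * s) ^ 2 by ring, Real.sqrt_sq (by positivity)]
      field_simp
      ring
    · rintro _ ⟨c, hc, rfl⟩
      exact two_sqrt_mul_le_div_add_mul hb.le hγ.le hc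

theorem stmt13_general (d T : ℕ)
    (γ₁ γ₂ : ℝ) (hγ₁ : 0 < γ₁) (hγ₂ : 0 < γ₂) (α : Fin d → Fin T → ℝ) :
    sInf {v : ℝ | ∃ c : Fin d → ℝ, (∀ j, 0 < c j) ∧
        v = γ₁ * ∑ j, ∑ t, |α j t| / c j + γ₂ * ∑ j, c j}
      = 2 * Real.sqrt (γ₁ * γ₂) * ∑ j, Real.sqrt (∑ t, |α j t|) := by
  have hsplit (c : Fin d → ℝ) : γ₁ * ∑ j, ∑ t, |α j t| / c j + γ₂ * ∑ j, c j
      = ∑ j, ((γ₁ * ∑ t, |α j t|) / c j + γ₂ * c j) := by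
    simp only [Finset.sum_add_distrib, Finset.mul_sum, Finset.sum_div, mul_div_assoc]
  have hglb := isGLB_sum_apply_of_isGLB_image (S := Ioi 0) fun j =>
    isGLB_div_add_mul_image_Ioi (b := γ₁ * ∑ t, |α j t|) (by positivity) hγ₂
  simp_rw [hsplit]
  refine (hglb.csInf_eq ⟨_, fun _ => 1, fun _ => mem_Ioi.2 one_pos, rfl⟩).trans ?_
  rw [Finset.mul_sum]
  congr 1 with j
  rw [mul_assoc 2, ← Real.sqrt_mul (by positivity), mul_right_comm]

theorem stmt13 (d T : ℕ) (hd : 0 < d) (hT : 0 < T)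
    (γ₁ γ₂ : ℝ) (hγ₁ : 0 < γ₁) (hγ₂ : 0 < γ₂) (α : Fin d → Fin T → ℝ) :
    sInf {v : ℝ | ∃ c : Fin d → ℝ, (∀ j, 0 < c j) ∧
        v = γ₁ * ∑ j, ∑ t, |α j t| / c j + γ₂ * ∑ j, c j}
      = 2 * Real.sqrt (γ₁ * γ₂) * ∑ j, Real.sqrt (∑ t, |α j t|) :=
  stmt13_general d T γ₁ γ₂ hγ₁ hγ₂ α
end

section
/- Suppose (α̂, σ̂) minimizes H(α, σ) = L(α) + μ₁ ∑_j σ_j⁻¹ a_j(α) + μ₂ ∑_j σ_j over all α and σ > 0, where a_j(α) > 0. Then α̂ minimizes G(α) = L(α) + 2√(μ₁μ₂) ∑_j √(a_j(α)). -/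
/-! For fixed `α`, AM-GM gives `μ₁ a / σ + μ₂ σ ≥ 2 √(μ₁ μ₂) √a` with equality at
`σ = √(μ₁/μ₂) √a`, so `G α` is the least value of `H α ·` over `σ > 0`. Hence
`G α̂ ≤ H (α̂, σ̂) ≤ H (α, σ*(α)) = G α`. -/

open Finset

theorem le_of_isLeast_image_of_forall_le {X Y β : Type*} [Preorder β] {H : X → Y → β}
    {G : X → β} {S : Set Y} (hG : ∀ x, IsLeast (H x '' S) (G x)) {x₀ : X} {y₀ : Y}
    (hy₀ : y₀ ∈ S) (hmin : ∀ x, ∀ y ∈ S, H x₀ y₀ ≤ H x y) (x : X) : G x₀ ≤ G x := by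
  obtain ⟨y, hy, hyx⟩ := (hG x).1
  calc G x₀ ≤ H x₀ y₀ := (hG x₀).2 (Set.mem_image_of_mem _ hy₀)
    _ ≤ H x y := hmin x y hy
    _ = G x := hyx

theorem isLeast_image_sum_pi {ι Y β : Type*} [Fintype ι] [AddCommMonoid β] [PartialOrder β]
    [IsOrderedAddMonoid β] {f : ι → Y → β} {S : ι → Set Y} {m : ι → β}
    (h : ∀ j, IsLeast (f j '' S j) (m j)) :
    IsLeast ((fun y => ∑ j, f j (y j)) '' Set.univ.pi S) (∑ j, m j) := by
  choose y hy hym using fun j => (h j).1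
  refine ⟨⟨y, fun j _ => hy j, sum_congr rfl fun j _ => hym j⟩, ?_⟩
  rintro _ ⟨z, hz, rfl⟩
  exact sum_le_sum fun j _ => (h j).2 (Set.mem_image_of_mem _ (hz j (Set.mem_univ j)))

theorem two_sqrt_mul_mul_sqrt_le {μ₁ μ₂ σ b : ℝ} (hμ₁ : 0 ≤ μ₁) (hμ₂ : 0 ≤ μ₂) (hσ : 0 < σ)
    (hb : 0 ≤ b) : 2 * √(μ₁ * μ₂) * √b ≤ μ₁ * σ⁻¹ * b + μ₂ * σ := by
  have hprod : √(μ₁ * μ₂) * √b = √(μ₁ * σ⁻¹ * b) * √(μ₂ * σ) := by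
    rw [← Real.sqrt_mul (by positivity), ← Real.sqrt_mul (by positivity)]
    congr 1
    field_simp
  calc 2 * √(μ₁ * μ₂) * √b = 2 * √(μ₁ * σ⁻¹ * b) * √(μ₂ * σ) := by rw [mul_assoc, hprod]; ring
    _ ≤ √(μ₁ * σ⁻¹ * b) ^ 2 + √(μ₂ * σ) ^ 2 := two_mul_le_add_sq _ _
    _ = μ₁ * σ⁻¹ * b + μ₂ * σ := by rw [Real.sq_sqrt (by positivity), Real.sq_sqrt (by positivity)]

-- `σ = √(μ₁/μ₂) √b` balances the two terms: `μ₁ b / σ = μ₂ σ`.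
theorem inv_mul_add_eq_two_sqrt_mul_mul_sqrt {μ₁ μ₂ b : ℝ} (hμ₁ : 0 < μ₁) (hμ₂ : 0 < μ₂) :
    μ₁ * (√(μ₁ / μ₂) * √b)⁻¹ * b + μ₂ * (√(μ₁ / μ₂) * √b) = 2 * √(μ₁ * μ₂) * √b := by
  have ht : 0 < √(μ₁ / μ₂) := by positivity
  have h₁ : μ₁ / √(μ₁ / μ₂) = √(μ₁ * μ₂) := by
    rw [div_eq_iff ht.ne', ← Real.sqrt_mul (by positivity)]
    rw [show μ₁ * μ₂ * (μ₁ / μ₂) = μ₁ ^ 2 by field_simp, Real.sqrt_sq hμ₁.le]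
  have h₂ : μ₂ * √(μ₁ / μ₂) = √(μ₁ * μ₂) := by
    calc μ₂ * √(μ₁ / μ₂) = √(μ₂ ^ 2) * √(μ₁ / μ₂) := by rw [Real.sqrt_sq hμ₂.le]
      _ = √(μ₁ * μ₂) := by rw [← Real.sqrt_mul (by positivity)]; congr 1; field_simp
  calc μ₁ * (√(μ₁ / μ₂) * √b)⁻¹ * b + μ₂ * (√(μ₁ / μ₂) * √b)
      = μ₁ / √(μ₁ / μ₂) * (b / √b) + μ₂ * √(μ₁ / μ₂) * √b := by rw [mul_inv]; ring
    _ = 2 * √(μ₁ * μ₂) * √b := by rw [h₁, h₂, Real.div_sqrt]; ring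

theorem isLeast_inv_mul_add {μ₁ μ₂ b : ℝ} (hμ₁ : 0 < μ₁) (hμ₂ : 0 < μ₂) (hb : 0 < b) :
    IsLeast ((fun σ => μ₁ * σ⁻¹ * b + μ₂ * σ) '' Set.Ioi 0) (2 * √(μ₁ * μ₂) * √b) :=
  ⟨⟨√(μ₁ / μ₂) * √b, mul_pos (by positivity) (Real.sqrt_pos.2 hb),
      inv_mul_add_eq_two_sqrt_mul_mul_sqrt hμ₁ hμ₂⟩,
    by rintro _ ⟨σ, hσ, rfl⟩; exact two_sqrt_mul_mul_sqrt_le hμ₁.le hμ₂.le hσ hb.le⟩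

theorem stmt15_general (X : Type*) (d : ℕ) (L : X → ℝ)
    (a : X → Fin d → ℝ) (ha : ∀ α j, 0 < a α j)
    (μ₁ μ₂ : ℝ) (hμ₁ : 0 < μ₁) (hμ₂ : 0 < μ₂)
    (αhat : X) (σhat : Fin d → ℝ) (hσhat : ∀ j, 0 < σhat j)
    (hmin : ∀ (α : X) (σ : Fin d → ℝ), (∀ j, 0 < σ j) →
      L αhat + μ₁ * ∑ j, (σhat j)⁻¹ * a αhat j + μ₂ * ∑ j, σhat j
        ≤ L α + μ₁ * ∑ j, (σ j)⁻¹ * a α j + μ₂ * ∑ j, σ j) :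
    ∀ α : X,
      L αhat + 2 * Real.sqrt (μ₁ * μ₂) * ∑ j, Real.sqrt (a αhat j)
        ≤ L α + 2 * Real.sqrt (μ₁ * μ₂) * ∑ j, Real.sqrt (a α j) := by
  let H (α : X) (σ : Fin d → ℝ) : ℝ := L α + ∑ j, (μ₁ * (σ j)⁻¹ * a α j + μ₂ * σ j)
  let G (α : X) : ℝ := L α + ∑ j, 2 * √(μ₁ * μ₂) * √(a α j)
  have hG (α : X) : IsLeast (H α '' Set.univ.pi fun _ => Set.Ioi 0) (G α) := by
    have := (monotone_id.const_add (L α)).map_isLeast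
      (isLeast_image_sum_pi fun j => isLeast_inv_mul_add hμ₁ hμ₂ (ha α j))
    rwa [Set.image_image] at this
  have hHmin (α : X) (σ : Fin d → ℝ) (hσ : σ ∈ Set.univ.pi fun _ => Set.Ioi 0) :
      H αhat σhat ≤ H α σ := by
    simpa only [H, mul_sum, mul_assoc, sum_add_distrib, add_assoc] using
      hmin α σ fun j => hσ j (Set.mem_univ j)
  intro α
  simpa only [G, mul_sum] using
    le_of_isLeast_image_of_forall_le hG (fun j _ => hσhat j) hHmin α

theorem stmt15 (X : Type*) (d : ℕ) (hd : 0 < d) (L : X → ℝ)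
    (a : X → Fin d → ℝ) (ha : ∀ α j, 0 < a α j)
    (μ₁ μ₂ : ℝ) (hμ₁ : 0 < μ₁) (hμ₂ : 0 < μ₂)
    (αhat : X) (σhat : Fin d → ℝ) (hσhat : ∀ j, 0 < σhat j)
    (hmin : ∀ (α : X) (σ : Fin d → ℝ), (∀ j, 0 < σ j) →
      L αhat + μ₁ * ∑ j, (σhat j)⁻¹ * a αhat j + μ₂ * ∑ j, σhat j
        ≤ L α + μ₁ * ∑ j, (σ j)⁻¹ * a α j + μ₂ * ∑ j, σ j) :
    ∀ α : X,
      L αhat + 2 * Real.sqrt (μ₁ * μ₂) * ∑ j, Real.sqrt (a αhat j)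
        ≤ L α + 2 * Real.sqrt (μ₁ * μ₂) * ∑ j, Real.sqrt (a α j) :=
  stmt15_general X d L a ha μ₁ μ₂ hμ₁ hμ₂ αhat σhat hσhat hmin
end
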